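/- arXiv:2605.24109 — 2 statements merged into one kernel-verified Lean document; each statement's English description precedes it below -/
import Mathlib

section
/- Let M ≥ 1, q_j = 2^{-j}, and let real numbers b, τ_j, a_j, c_j, n_j, m_j, h_j satisfy: (i) b ≤ τ_0 - 2; (ii) for every 1 ≤ k ≤ M, b ≤ 2(1-2^{-k})α - 5/2 - τ_0 + (1/2)∑_{j=1}^k τ_j + 3τ_{k+1} - n_0 - (3/2)∑_{j=1}^k n_j + (1/2)∑_{j=1}^k m_j + m_{k+1} + 2∑_{j=0}^{k-1} h_j + 4h_k; (iii) for all j ≥ 0: n_j = a_{j+1} + c_j, n_j ≤ τ_j, τ_{j+1} ≤ a_{j+1}, h_j ≤ c_j, m_{j+1} + 2h_j ≤ q_{j+1} + c_j, and a_j ≤ α q_j for j ≥ 1. Then for every 1 ≤ K ≤ M, b ≤ (4/5 + 1/(5·6^K))α - 2. -/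
/-!
Every structural constraint is used only to eliminate a variable that occurs with a positive
coefficient: `m` and `h` through `m (j+1) + 2 h j ≤ q (j+1) + c j` and `h j ≤ c j`, then `c`
through `n j = a (j+1) + c j`, then `n` and `τ` through `n j ≤ τ j ≤ a j`. This turns the
`k`-th incidence estimate into `b ≤ R_k = 2(1 - q_k)α - 2 - τ₀/2 + (3/2)a_k - ∑_{1 ≤ j ≤ k} a_j`.
With weights `1/3` on `b ≤ τ₀ - 2`, `4/3^(k+1)` on `b ≤ R_k` for `k < K` and `2/3^K` on
`b ≤ R_K`, the terms `τ₀` and `a_j` for `j < K` cancel, leaving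
`b ≤ (4/5)(1 - 6^(-K))α - 2 + a_K/3^K`, and `a_K ≤ α 2^(-K)` finishes.
-/

open Finset

noncomputable def incidenceBound (α : ℝ) (τ n m h : ℕ → ℝ) (k : ℕ) : ℝ :=
  2 * (1 - (1/2 : ℝ) ^ k) * α - 5/2 - τ 0
    + (1/2) * ∑ j ∈ Icc 1 k, τ j + 3 * τ (k + 1)
    - n 0 - (3/2) * ∑ j ∈ Icc 1 k, n j
    + (1/2) * ∑ j ∈ Icc 1 k, m j + m (k + 1)
    + 2 * ∑ j ∈ range k, h j + 4 * h k

noncomputable def reducedBound (α τ₀ : ℝ) (a : ℕ → ℝ) (k : ℕ) : ℝ :=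
  2 * (1 - (1/2 : ℝ) ^ k) * α - 2 - τ₀ / 2 + (3/2) * a k - ∑ j ∈ range k, a (j + 1)

noncomputable def averagedBound (α : ℝ) (a : ℕ → ℝ) (K : ℕ) : ℝ :=
  (4/5) * (1 - (1/6 : ℝ) ^ K) * α - 2 + (1/3 : ℝ) ^ K * a K

lemma sum_Icc_one_eq_sum_range {M : Type*} [AddCommMonoid M] (f : ℕ → M) (k : ℕ) :
    ∑ j ∈ Icc 1 k, f j = ∑ j ∈ range k, f (j + 1) := by
  induction k with
  | zero => simp
  | succ k ih => rw [sum_Icc_succ_top (by omega), ih, sum_range_succ]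

lemma incidenceBound_eq (α : ℝ) (τ n m h : ℕ → ℝ) (k : ℕ) :
    incidenceBound α τ n m h k
      = 2 * (1 - (1/2 : ℝ) ^ k) * α - 5/2 - τ 0 - n 0
        + ∑ j ∈ range k,
            ((1/2) * τ (j + 1) - (3/2) * n (j + 1) + (1/2) * m (j + 1) + 2 * h j)
        + 3 * τ (k + 1) + m (k + 1) + 4 * h k := by
  simp only [incidenceBound, sum_Icc_one_eq_sum_range, sum_add_distrib, sum_sub_distrib, mul_sum]
  ring

lemma incidenceSummand_le {τ a c n m h : ℕ → ℝ} (hn : ∀ j, n j = a (j + 1) + c j)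
    (hτa : ∀ j, τ (j + 1) ≤ a (j + 1)) (hhc : ∀ j, h j ≤ c j)
    (hmh : ∀ j, m (j + 1) + 2 * h j ≤ (1/2 : ℝ) ^ (j + 1) + c j) (j : ℕ) :
    (1/2) * τ (j + 1) - (3/2) * n (j + 1) + (1/2) * m (j + 1) + 2 * h j
      ≤ ((1/2) * (1/2 : ℝ) ^ j + (3/2) * n j)
        - ((1/2) * (1/2 : ℝ) ^ (j + 1) + (3/2) * n (j + 1)) - a (j + 1) := by
  have hq : (1/2 : ℝ) ^ (j + 1) = (1/2) * (1/2) ^ j := by ring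
  linarith [hn j, hτa j, hhc j, hmh j]

lemma incidenceBound_le_reducedBound {α : ℝ} {τ a c n m h : ℕ → ℝ}
    (hn : ∀ j, n j = a (j + 1) + c j) (hnτ : ∀ j, n j ≤ τ j)
    (hτa : ∀ j, τ (j + 1) ≤ a (j + 1)) (hhc : ∀ j, h j ≤ c j)
    (hmh : ∀ j, m (j + 1) + 2 * h j ≤ (1/2 : ℝ) ^ (j + 1) + c j) {k : ℕ} (hk : 1 ≤ k) :
    incidenceBound α τ n m h k ≤ reducedBound α (τ 0) a k := by
  have hsum := sum_le_sum fun j (_ : j ∈ range k) => incidenceSummand_le hn hτa hhc hmh j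
  rw [sum_sub_distrib,
    sum_range_sub' (fun j => (1/2) * (1/2 : ℝ) ^ j + (3/2) * n j)] at hsum
  obtain ⟨k, rfl⟩ : ∃ i, k = i + 1 := ⟨k - 1, by omega⟩
  have hq : (1/2 : ℝ) ^ (k + 2) = (1/2) * (1/2) ^ (k + 1) := by ring
  rw [incidenceBound_eq, reducedBound]
  norm_num at hsum
  linarith [hn (k + 1), hτa k, hτa (k + 1), hhc (k + 1), hmh (k + 1), hnτ 0, hnτ (k + 1)]

lemma reducedBound_succ (α τ₀ : ℝ) (a : ℕ → ℝ) (K : ℕ) :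
    reducedBound α τ₀ a (K + 1)
      = reducedBound α τ₀ a K + 2 * (1/2 : ℝ) ^ (K + 1) * α + (1/2) * a (K + 1) - (3/2) * a K := by
  rw [reducedBound, reducedBound, sum_range_succ]
  ring

lemma averagedBound_succ (α τ₀ : ℝ) (a : ℕ → ℝ) (K : ℕ) :
    averagedBound α a (K + 1) = averagedBound α a K
      + 2 * (1/3 : ℝ) ^ (K + 1) * (reducedBound α τ₀ a (K + 1) - reducedBound α τ₀ a K) := by
  rw [reducedBound_succ, averagedBound, averagedBound,
    show (1/6 : ℝ) = (1/2) * (1/3) by norm_num, mul_pow, mul_pow]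
  ring

/-- The invariant: the partial average `(τ₀ - 2)/3 + ∑_{k=1}^{K} 4/3^(k+1) R_k` is at least
`(1 - 2/3^(K+1)) b` and equals `averagedBound α a K - 2/3^(K+1) R_K`. -/
lemma weighted_average_le {α b τ₀ : ℝ} {a : ℕ → ℝ} (hbasic : b ≤ τ₀ - 2) {K : ℕ}
    (hR : ∀ k, 1 ≤ k → k ≤ K → b ≤ reducedBound α τ₀ a k) :
    (1 - 2 * (1/3 : ℝ) ^ (K + 1)) * b + 2 * (1/3 : ℝ) ^ (K + 1) * reducedBound α τ₀ a K
      ≤ averagedBound α a K := by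
  induction K with
  | zero =>
    norm_num [reducedBound, averagedBound]
    linarith
  | succ K ih =>
    have hstep := mul_le_mul_of_nonneg_left (hR (K + 1) (by omega) le_rfl)
      (by positivity : (0 : ℝ) ≤ 4 * (1/3) ^ (K + 2))
    rw [averagedBound_succ α τ₀]
    have ih' := ih fun k hk hkK => hR k hk (by omega)
    simp only [pow_succ] at hstep ih' ⊢
    linarith

lemma le_averagedBound {α b τ₀ : ℝ} {a : ℕ → ℝ} (hbasic : b ≤ τ₀ - 2) {K : ℕ} (hK : 1 ≤ K)
    (hR : ∀ k, 1 ≤ k → k ≤ K → b ≤ reducedBound α τ₀ a k) :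
    b ≤ averagedBound α a K := by
  have hRK := mul_le_mul_of_nonneg_left (hR K hK le_rfl)
    (by positivity : (0 : ℝ) ≤ 2 * (1/3) ^ (K + 1))
  linarith [weighted_average_le hbasic hR]

lemma averagedBound_le {α : ℝ} {a : ℕ → ℝ} {K : ℕ} (ha : a K ≤ α * (1/2 : ℝ) ^ K) :
    averagedBound α a K ≤ (4/5 + 1/(5 * (6 : ℝ) ^ K)) * α - 2 := by
  have h6 : (1/6 : ℝ) ^ K = (1/3) ^ K * (1/2) ^ K := by rw [← mul_pow]; norm_num
  have ha3 := mul_le_mul_of_nonneg_left ha (by positivity : (0 : ℝ) ≤ (1/3) ^ K)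
  have h56 : 1 / (5 * (6 : ℝ) ^ K) = (1/5) * (1/6) ^ K := by
    rw [one_div_pow, one_div_mul_one_div]
  rw [averagedBound, h56, h6]
  linarith

theorem stmt9_general (M : ℕ) (α b : ℝ) (τ a c n m h : ℕ → ℝ)
    (hbasic : b ≤ τ 0 - 2)
    (hLP : ∀ k, 1 ≤ k → k ≤ M →
      b ≤ 2 * (1 - (1/2 : ℝ) ^ k) * α - 5/2 - τ 0
        + (1/2) * ∑ j ∈ Finset.Icc 1 k, τ j + 3 * τ (k + 1)
        - n 0 - (3/2) * ∑ j ∈ Finset.Icc 1 k, n j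
        + (1/2) * ∑ j ∈ Finset.Icc 1 k, m j + m (k + 1)
        + 2 * ∑ j ∈ Finset.range k, h j + 4 * h k)
    (hn : ∀ j, n j = a (j + 1) + c j)
    (hnτ : ∀ j, n j ≤ τ j)
    (hτa : ∀ j, τ (j + 1) ≤ a (j + 1))
    (hhc : ∀ j, h j ≤ c j)
    (hmh : ∀ j, m (j + 1) + 2 * h j ≤ (1/2 : ℝ) ^ (j + 1) + c j)
    (ha : ∀ j, 1 ≤ j → a j ≤ α * (1/2 : ℝ) ^ j) :
    ∀ K, 1 ≤ K → K ≤ M → b ≤ (4/5 + 1/(5 * (6 : ℝ) ^ K)) * α - 2 := by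
  intro K hK hKM
  have hR : ∀ k, 1 ≤ k → k ≤ K → b ≤ reducedBound α (τ 0) a k := fun k hk hkK =>
    (hLP k hk (hkK.trans hKM)).trans (incidenceBound_le_reducedBound hn hnτ hτa hhc hmh hk)
  exact (le_averagedBound hbasic hK hR).trans (averagedBound_le (ha K hK))

/-- the linear programming core of Theorem 1.5 (case `α ≤ 1/2`). From the
basic estimate `b ≤ τ₀ - 2`, the Kakeya/Szemerédi–Trotter estimates for `1 ≤ k ≤ M`, and the
structural exponent inequalities (with `q_j = 2^{-j}`), one gets
`b ≤ (4/5 + 1/(5·6^K))α - 2` for every `1 ≤ K ≤ M`. -/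
theorem stmt9 (M : ℕ) (α b : ℝ) (τ a c n m h : ℕ → ℝ)
    (hα : 0 < α ∧ α ≤ 1)
    (hbasic : b ≤ τ 0 - 2)
    (hLP : ∀ k, 1 ≤ k → k ≤ M →
      b ≤ 2 * (1 - (1/2 : ℝ) ^ k) * α - 5/2 - τ 0
        + (1/2) * ∑ j ∈ Finset.Icc 1 k, τ j + 3 * τ (k + 1)
        - n 0 - (3/2) * ∑ j ∈ Finset.Icc 1 k, n j
        + (1/2) * ∑ j ∈ Finset.Icc 1 k, m j + m (k + 1)
        + 2 * ∑ j ∈ Finset.range k, h j + 4 * h k)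
    (hn : ∀ j, n j = a (j + 1) + c j)
    (hnτ : ∀ j, n j ≤ τ j)
    (hτa : ∀ j, τ (j + 1) ≤ a (j + 1))
    (hhc : ∀ j, h j ≤ c j)
    (hmh : ∀ j, m (j + 1) + 2 * h j ≤ (1/2 : ℝ) ^ (j + 1) + c j)
    (ha : ∀ j, 1 ≤ j → a j ≤ α * (1/2 : ℝ) ^ j) :
    ∀ K, 1 ≤ K → K ≤ M → b ≤ (4/5 + 1/(5 * (6 : ℝ) ^ K)) * α - 2 :=
  stmt9_general M α b τ a c n m h hbasic hLP hn hnτ hτa hhc hmh ha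
end

section
/- The feasibility of the exponent 4α/5: for any M ≥ 1 and α ∈ (0,1], the assignment b = 4α/5 - 2, τ_0 = 4α/5, τ_j = a_j = (4α/5)·2^{-j} for 1 ≤ j ≤ M+1, c_0 = h_0 = 2α/5, c_j = h_j = (4α/5)·2^{-(j+1)} for 1 ≤ j ≤ M, m_{j+1} = (1 - 4α/5)·2^{-(j+1)} for 0 ≤ j ≤ M, n_j = a_{j+1} + c_j, satisfies all the structural constraints: n_j = τ_j, τ_{j+1} = a_{j+1}, h_j = c_j, m_{j+1} + 2h_j = q_{j+1} + c_j (with q_j = 2^{-j}), a_j ≤ α q_j, and moreover b = τ_0 - 2, and for every 1 ≤ k ≤ M the expression 2(1-2^{-k})α - 5/2 - τ_0 + (1/2)∑_{j=1}^k τ_j + 3τ_{k+1} - n_0 - (3/2)∑_{j=1}^k n_j + (1/2)∑_{j=1}^k m_j + m_{k+1} + 2∑_{j=0}^{k-1} h_j + 4h_k equals exactly 4α/5 - 2. -/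
open Finset

lemma forall_le_of_zero_of_one_le {p : ℕ → Prop} {N : ℕ} (h₀ : p 0)
    (h : ∀ j, 1 ≤ j → j ≤ N → p j) : ∀ j ≤ N, p j
  | 0, _ => h₀
  | j + 1, hj => h (j + 1) (Nat.succ_pos j) hj

lemma sum_range_half_pow_succ (k : ℕ) :
    ∑ j ∈ range k, (1 / 2 : ℝ) ^ (j + 1) = 1 - (1 / 2) ^ k := by
  induction k with
  | zero => simp
  | succ k ih => rw [sum_range_succ, ih]; ring

lemma sum_range_eq_of_eq_mul_half_pow_succ {f : ℕ → ℝ} {κ : ℝ} {k : ℕ}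
    (hf : ∀ j < k, f j = κ * (1 / 2) ^ (j + 1)) :
    ∑ j ∈ range k, f j = κ * (1 - (1 / 2) ^ k) := by
  rw [sum_congr rfl fun j hj => hf j (mem_range.mp hj), ← mul_sum, sum_range_half_pow_succ]

/- With `4α/5` replaced by a general scale `κ`, the geometric sums turn the expression into
`2α - 2 - 3κ/2 + (5κ/2 - 2α) 2^{-k}`; `κ = 4α/5` is the only scale for which it does not depend
on `k`. -/
lemma Lk_estimate_eq (α : ℝ) (τ n m h : ℕ → ℝ) (k : ℕ)
    (hτ : ∀ j ≤ k + 1, τ j = 4 * α / 5 * (1 / 2) ^ j)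
    (hn : ∀ j ≤ k, n j = 4 * α / 5 * (1 / 2) ^ j)
    (hm : ∀ j ≤ k, m (j + 1) = (1 - 4 * α / 5) * (1 / 2) ^ (j + 1))
    (hh : ∀ j ≤ k, h j = 4 * α / 5 * (1 / 2) ^ (j + 1)) :
    2 * (1 - (1/2 : ℝ) ^ k) * α - 5/2 - τ 0
        + (1/2) * ∑ j ∈ Icc 1 k, τ j + 3 * τ (k + 1)
        - n 0 - (3/2) * ∑ j ∈ Icc 1 k, n j
        + (1/2) * ∑ j ∈ Icc 1 k, m j + m (k + 1)
        + 2 * ∑ j ∈ range k, h j + 4 * h k = 4 * α / 5 - 2 := by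
  rw [sum_Icc_one_eq_sum_range τ, sum_Icc_one_eq_sum_range n, sum_Icc_one_eq_sum_range m,
    sum_range_eq_of_eq_mul_half_pow_succ fun j hj => hτ (j + 1) (by omega),
    sum_range_eq_of_eq_mul_half_pow_succ fun j hj => hn (j + 1) (by omega),
    sum_range_eq_of_eq_mul_half_pow_succ fun j hj => hm j (by omega),
    sum_range_eq_of_eq_mul_half_pow_succ fun j hj => hh j (by omega),
    hτ 0 (by omega), hτ (k + 1) le_rfl, hn 0 (by omega), hm k le_rfl, hh k le_rfl]
  ring

theorem stmt11_general (M : ℕ) (α : ℝ) (hα : 0 < α ∧ α ≤ 1)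
    (b : ℝ) (τ a c n m h : ℕ → ℝ)
    (hb : b = 4 * α / 5 - 2)
    (hτ0 : τ 0 = 4 * α / 5)
    (hτ : ∀ j, 1 ≤ j → j ≤ M + 1 → τ j = (4 * α / 5) * (1/2 : ℝ) ^ j)
    (ha : ∀ j, 1 ≤ j → j ≤ M + 1 → a j = (4 * α / 5) * (1/2 : ℝ) ^ j)
    (hc0 : c 0 = 2 * α / 5) (hh0 : h 0 = 2 * α / 5)
    (hc : ∀ j, 1 ≤ j → j ≤ M → c j = (4 * α / 5) * (1/2 : ℝ) ^ (j + 1))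
    (hh : ∀ j, 1 ≤ j → j ≤ M → h j = (4 * α / 5) * (1/2 : ℝ) ^ (j + 1))
    (hm : ∀ j ≤ M, m (j + 1) = (1 - 4 * α / 5) * (1/2 : ℝ) ^ (j + 1))
    (hn : ∀ j ≤ M, n j = a (j + 1) + c j) :
    (∀ j ≤ M, n j = τ j) ∧
    (∀ j ≤ M, τ (j + 1) = a (j + 1)) ∧
    (∀ j ≤ M, h j = c j) ∧
    (∀ j ≤ M, m (j + 1) + 2 * h j = (1/2 : ℝ) ^ (j + 1) + c j) ∧
    (∀ j, 1 ≤ j → j ≤ M + 1 → a j ≤ α * (1/2 : ℝ) ^ j) ∧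
    (b = τ 0 - 2) ∧
    (∀ k, 1 ≤ k → k ≤ M →
      2 * (1 - (1/2 : ℝ) ^ k) * α - 5/2 - τ 0
        + (1/2) * ∑ j ∈ Finset.Icc 1 k, τ j + 3 * τ (k + 1)
        - n 0 - (3/2) * ∑ j ∈ Finset.Icc 1 k, n j
        + (1/2) * ∑ j ∈ Finset.Icc 1 k, m j + m (k + 1)
        + 2 * ∑ j ∈ Finset.range k, h j + 4 * h k = 4 * α / 5 - 2) := by
  have hτ' : ∀ j ≤ M + 1, τ j = 4 * α / 5 * (1 / 2) ^ j :=
    forall_le_of_zero_of_one_le (by rw [hτ0]; ring) hτ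
  have hc' : ∀ j ≤ M, c j = 4 * α / 5 * (1 / 2) ^ (j + 1) :=
    forall_le_of_zero_of_one_le (by rw [hc0]; ring) hc
  have hh' : ∀ j ≤ M, h j = 4 * α / 5 * (1 / 2) ^ (j + 1) :=
    forall_le_of_zero_of_one_le (by rw [hh0]; ring) hh
  have ha' : ∀ j ≤ M, a (j + 1) = 4 * α / 5 * (1 / 2) ^ (j + 1) :=
    fun j hj => ha (j + 1) (by omega) (by omega)
  have hn' : ∀ j ≤ M, n j = 4 * α / 5 * (1 / 2) ^ j :=
    fun j hj => by rw [hn j hj, ha' j hj, hc' j hj]; ring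
  refine ⟨fun j hj => by rw [hn' j hj, hτ' j (by omega)],
    fun j hj => by rw [hτ' (j + 1) (by omega), ha' j hj],
    fun j hj => by rw [hh' j hj, hc' j hj],
    fun j hj => by rw [hm j hj, hh' j hj, hc' j hj]; ring,
    fun j hj₁ hj => ?_, by rw [hb, hτ0], fun k _ hk => ?_⟩
  · rw [ha j hj₁ hj]
    gcongr
    linarith [hα.1]
  · exact Lk_estimate_eq α τ n m h k (fun j hj => hτ' j (by omega)) (fun j hj => hn' j (by omega))
      (fun j hj => hm j (by omega)) (fun j hj => hh' j (by omega))

/-- Remark 4.2: feasibility of the exponent `4α/5`. The explicit assignment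
`b = 4α/5 - 2`, `τ₀ = 4α/5`, `τ_j = a_j = (4α/5)2^{-j}` for `1 ≤ j ≤ M+1`,
`c₀ = h₀ = 2α/5`, `c_j = h_j = (4α/5)2^{-(j+1)}` for `1 ≤ j ≤ M`,
`m_{j+1} = (1 - 4α/5)2^{-(j+1)}`, `n_j = a_{j+1} + c_j`, saturates all the structural
constraints, the basic estimate, and each of the `L₀,…,L_k` estimates at `4α/5 - 2`. -/
theorem stmt11 (M : ℕ) (hM : 1 ≤ M) (α : ℝ) (hα : 0 < α ∧ α ≤ 1)
    (b : ℝ) (τ a c n m h : ℕ → ℝ)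
    (hb : b = 4 * α / 5 - 2)
    (hτ0 : τ 0 = 4 * α / 5)
    (hτ : ∀ j, 1 ≤ j → j ≤ M + 1 → τ j = (4 * α / 5) * (1/2 : ℝ) ^ j)
    (ha : ∀ j, 1 ≤ j → j ≤ M + 1 → a j = (4 * α / 5) * (1/2 : ℝ) ^ j)
    (hc0 : c 0 = 2 * α / 5) (hh0 : h 0 = 2 * α / 5)
    (hc : ∀ j, 1 ≤ j → j ≤ M → c j = (4 * α / 5) * (1/2 : ℝ) ^ (j + 1))
    (hh : ∀ j, 1 ≤ j → j ≤ M → h j = (4 * α / 5) * (1/2 : ℝ) ^ (j + 1))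
    (hm : ∀ j ≤ M, m (j + 1) = (1 - 4 * α / 5) * (1/2 : ℝ) ^ (j + 1))
    (hn : ∀ j ≤ M, n j = a (j + 1) + c j) :
    (∀ j ≤ M, n j = τ j) ∧
    (∀ j ≤ M, τ (j + 1) = a (j + 1)) ∧
    (∀ j ≤ M, h j = c j) ∧
    (∀ j ≤ M, m (j + 1) + 2 * h j = (1/2 : ℝ) ^ (j + 1) + c j) ∧
    (∀ j, 1 ≤ j → j ≤ M + 1 → a j ≤ α * (1/2 : ℝ) ^ j) ∧
    (b = τ 0 - 2) ∧
    (∀ k, 1 ≤ k → k ≤ M →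
      2 * (1 - (1/2 : ℝ) ^ k) * α - 5/2 - τ 0
        + (1/2) * ∑ j ∈ Finset.Icc 1 k, τ j + 3 * τ (k + 1)
        - n 0 - (3/2) * ∑ j ∈ Finset.Icc 1 k, n j
        + (1/2) * ∑ j ∈ Finset.Icc 1 k, m j + m (k + 1)
        + 2 * ∑ j ∈ Finset.range k, h j + 4 * h k = 4 * α / 5 - 2) :=
  stmt11_general M α hα b τ a c n m h hb hτ0 hτ ha hc0 hh0 hc hh hm hn
end
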